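/- arXiv:2604.00179 — 2 statements merged into one kernel-verified Lean document; each statement's English description precedes it below -/
import Mathlib

section
/- Consider the projected recursion x_{t+1} = Π_X[x_t + α(A_ff x_t + A_fs y_t − b1 + ε_t)] with constant step size α > 0, arbitrary sequences (y_t) ⊆ ℝ^m and (ε_t) ⊆ ℝ^n, and x_0 ∈ X. Suppose U_Xᵀ A_ff U_X is invertible and set c1 := U_X (U_Xᵀ A_ff U_X)^{-1} U_Xᵀ and, for y ∈ ℝ^m, x_p*(y) := c1 (b1 − A_fs y). Then for every T ≥ 1, with x̄_T := (1/T)Σ_{t=0}^{T−1} x_t, ȳ_T := (1/T)Σ_{t=0}^{T−1} y_t, and ε̄_T := Σ_{t=0}^{T−1} ε_t, one has the exact identity x̄_T − x_p*(ȳ_T) = (c1/T)((x_T − x_0)/α − Π_X ε̄_T). -/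
open Matrix MeasureTheory Finset
open scoped BigOperators

noncomputable section
namespace TTSA

abbrev E (n : ℕ) : Type := EuclideanSpace ℝ (Fin n)

def mv {k l : ℕ} (M : Matrix (Fin k) (Fin l) ℝ) (x : E l) : E k :=
  Matrix.toEuclideanLin M x

def specNorm {k l : ℕ} (M : Matrix (Fin k) (Fin l) ℝ) : ℝ :=
  ‖LinearMap.toContinuousLinearMap (Matrix.toEuclideanLin M)‖

def sigmaMin {k : ℕ} (M : Matrix (Fin k) (Fin k) ℝ) : ℝ :=
  sInf ((fun v : E k => ‖mv M v‖) '' {v | ‖v‖ = 1})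

def resolvent {k l : ℕ} (U : Matrix (Fin k) (Fin l) ℝ) (A : Matrix (Fin k) (Fin k) ℝ) :
    Matrix (Fin k) (Fin k) ℝ :=
  U * (Uᵀ * A * U)⁻¹ * Uᵀ

/-!
Write `Π = U Uᵀ` and `c₁ = resolvent U A`. Orthonormality gives `c₁ Π = c₁` and `Π² = Π`, and
invertibility of `Uᵀ A U` gives `c₁ A Π = Π`, so `c₁ A` is the identity on `X`, where every iterate
lives. Applying `c₁` to the scaled increment `(x (t+1) - x t) / α = Π (A x t + A_fs y t - b₁ + ε t)`
therefore yields `x t + c₁ (A_fs y t - b₁ + ε t)`; summing over `t < T` telescopes and dividing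
by `T` gives the identity.
-/

section Projection

variable {ι κ R : Type*} [Fintype ι] [Fintype κ] [DecidableEq κ] [CommSemiring R]
  {U : Matrix ι κ R}

lemma mul_transpose_mul_self_of_orthonormal (hU : Uᵀ * U = 1) : U * Uᵀ * U = U := by
  rw [Matrix.mul_assoc, hU, Matrix.mul_one]

lemma isIdempotentElem_mul_transpose_of_orthonormal (hU : Uᵀ * U = 1) :
    IsIdempotentElem (U * Uᵀ) := by
  rw [IsIdempotentElem, ← Matrix.mul_assoc, mul_transpose_mul_self_of_orthonormal hU]

end Projection

section Resolvent

variable {k l : ℕ} {U : Matrix (Fin k) (Fin l) ℝ} {A : Matrix (Fin k) (Fin k) ℝ}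

lemma resolvent_mul_proj (hU : Uᵀ * U = 1) : resolvent U A * (U * Uᵀ) = resolvent U A := by
  rw [resolvent, Matrix.mul_assoc, ← Matrix.mul_assoc Uᵀ, hU, Matrix.one_mul]

lemma resolvent_mul_mul_self (hA : IsUnit (Uᵀ * A * U)) : resolvent U A * A * U = U := by
  have hdet : IsUnit (Uᵀ * A * U).det := (Matrix.isUnit_iff_isUnit_det _).mp hA
  calc resolvent U A * A * U = U * ((Uᵀ * A * U)⁻¹ * (Uᵀ * A * U)) := by
        simp only [resolvent, Matrix.mul_assoc]
    _ = U := by rw [Matrix.nonsing_inv_mul _ hdet, Matrix.mul_one]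

lemma resolvent_mul_mul_proj (hA : IsUnit (Uᵀ * A * U)) :
    resolvent U A * A * (U * Uᵀ) = U * Uᵀ := by
  rw [← Matrix.mul_assoc, resolvent_mul_mul_self hA]

end Resolvent

section MatrixVector

variable {k l p : ℕ}

lemma mv_mv (M : Matrix (Fin k) (Fin l) ℝ) (N : Matrix (Fin l) (Fin p) ℝ) (x : E p) :
    mv M (mv N x) = mv (M * N) x := by
  simp [mv]

lemma mv_add (M : Matrix (Fin k) (Fin l) ℝ) (a b : E l) : mv M (a + b) = mv M a + mv M b :=
  map_add _ _ _

lemma mv_sub (M : Matrix (Fin k) (Fin l) ℝ) (a b : E l) : mv M (a - b) = mv M a - mv M b :=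
  map_sub _ _ _

lemma mv_smul (M : Matrix (Fin k) (Fin l) ℝ) (c : ℝ) (a : E l) : mv M (c • a) = c • mv M a :=
  map_smul _ _ _

lemma mv_sum (M : Matrix (Fin k) (Fin l) ℝ) (s : Finset ℕ) (f : ℕ → E l) :
    mv M (∑ t ∈ s, f t) = ∑ t ∈ s, mv M (f t) :=
  map_sum _ _ _

end MatrixVector

section ProjectedRecursion

variable {n m : ℕ} {P C A : Matrix (Fin n) (Fin n) ℝ} {B : Matrix (Fin n) (Fin m) ℝ} {b : E n}
  {α : ℝ} {y : ℕ → E m} {ε x : ℕ → E n}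

lemma mv_proj_eq_self_of_recursion {f : ℕ → E n} (hP : IsIdempotentElem P)
    (hx0 : mv P (x 0) = x 0) (hrec : ∀ t, x (t + 1) = mv P (f t)) (t : ℕ) :
    mv P (x t) = x t := by
  cases t with
  | zero => exact hx0
  | succ t => rw [hrec t, mv_mv, hP.eq]

lemma mv_scaled_increment_eq (hα : α ≠ 0) (hCP : C * P = C) (hCAP : C * A * P = P)
    (hx : ∀ t, mv P (x t) = x t)
    (hrec : ∀ t, x (t + 1) = mv P (x t + α • (mv A (x t) + mv B (y t) - b + ε t))) (t : ℕ) :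
    mv C (α⁻¹ • (x (t + 1) - x t)) = x t + mv C (mv B (y t) - b + ε t) := by
  have hinc : α⁻¹ • (x (t + 1) - x t) = mv P (mv A (x t) + mv B (y t) - b + ε t) := by
    rw [hrec t, mv_add, hx t, mv_smul, add_sub_cancel_left, smul_smul, inv_mul_cancel₀ hα,
      one_smul]
  have hCA : mv C (mv A (x t)) = x t := by
    rw [mv_mv, ← hx t, mv_mv, hCAP]
  rw [hinc, mv_mv, hCP, add_sub_assoc, add_assoc, mv_add, hCA]

lemma mv_scaled_displacement_eq_sum
    (hinc : ∀ t, mv C (α⁻¹ • (x (t + 1) - x t)) = x t + mv C (mv B (y t) - b + ε t)) (T : ℕ) :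
    mv C (α⁻¹ • (x T - x 0)) =
      ∑ t ∈ range T, x t + mv C (mv B (∑ t ∈ range T, y t) - (T : ℝ) • b + ∑ t ∈ range T, ε t) := by
  rw [← sum_range_sub, smul_sum, mv_sum]
  simp only [hinc]
  rw [sum_add_distrib, ← mv_sum, sum_add_distrib, sum_sub_distrib, ← mv_sum, sum_const,
    card_range, Nat.cast_smul_eq_nsmul]

end ProjectedRecursion

/-- exact inverted identity for the fast Polyak–Ruppert average
around the instantaneous constrained solution `x_p*(ȳ_T) = c1 (b1 - A_fs ȳ_T)`,
with `c1 = resolvent U_X A_ff`. -/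
theorem fast_inverted_identity {n m d : ℕ}
    (Aff : Matrix (Fin n) (Fin n) ℝ) (Afs : Matrix (Fin n) (Fin m) ℝ)
    (b1 : E n)
    (UX : Matrix (Fin n) (Fin d) ℝ) (hUX : UXᵀ * UX = 1)
    (h1 : IsUnit (UXᵀ * Aff * UX))
    (α : ℝ) (hα : 0 < α)
    (y : ℕ → E m) (ε : ℕ → E n) (x : ℕ → E n)
    (hx0 : x 0 ∈ Set.range (mv UX))
    (hrec : ∀ t : ℕ, x (t + 1) =
      mv (UX * UXᵀ) (x t + α • (mv Aff (x t) + mv Afs (y t) - b1 + ε t))) :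
    ∀ T : ℕ, 1 ≤ T →
      (T : ℝ)⁻¹ • (∑ t ∈ Finset.range T, x t) -
        mv (resolvent UX Aff)
          (b1 - mv Afs ((T : ℝ)⁻¹ • (∑ t ∈ Finset.range T, y t))) =
      (T : ℝ)⁻¹ • mv (resolvent UX Aff)
        (α⁻¹ • (x T - x 0) - mv (UX * UXᵀ) (∑ t ∈ Finset.range T, ε t)) := by
  intro T hT
  obtain ⟨v, hv⟩ := hx0
  have hx : ∀ t, mv (UX * UXᵀ) (x t) = x t :=
    mv_proj_eq_self_of_recursion (isIdempotentElem_mul_transpose_of_orthonormal hUX)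
      (by rw [← hv, mv_mv, mul_transpose_mul_self_of_orthonormal hUX]) hrec
  have hsum := mv_scaled_displacement_eq_sum
    (mv_scaled_increment_eq hα.ne' (resolvent_mul_proj hUX) (resolvent_mul_mul_proj h1) hx hrec) T
  have hT0 : (T : ℝ) ≠ 0 := Nat.cast_ne_zero.mpr (by omega)
  rw [mv_sub _ (α⁻¹ • _), mv_mv, resolvent_mul_proj hUX, hsum]
  simp only [mv_add, mv_sub, mv_smul, smul_add, smul_sub, smul_smul, inv_mul_cancel₀ hT0, one_smul]
  abel
end TTSA
end
end

section
/- Under the same setting as the coupled projected recursions (x_0 ∈ X, y_0 ∈ Y, constant step sizes α, β > 0, arbitrary noise sequences, U_Xᵀ A_ff U_X invertible with c1 := U_X (U_Xᵀ A_ff U_X)^{-1} U_Xᵀ, and (x_p*, y_p*) ∈ X × Y the constrained solution satisfying Π_X(A_ff x_p* + A_fs y_p* − b1) = 0 and Π_Y(A_sf x_p* + A_ss y_p* − b2) = 0), for every T ≥ 1 the Polyak–Ruppert average of the fast iterate satisfies the exact identity x̄_T − x_p* = (c1/T)((x_T − x_0)/α − Π_X ε̄_T) − c1 A_fs (ȳ_T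 − y_p*), where x̄_T := (1/T)Σ_{t=0}^{T−1} x_t, ȳ_T := (1/T)Σ_{t=0}^{T−1} y_t, and ε̄_T := Σ_{t=0}^{T−1} ε_t. -/
/-! Since every iterate lies in `X`, which `Π_X` fixes, the recursion telescopes to
`α⁻¹ (x_T - x_0) = Π_X (A_ff Σ x_t + A_fs Σ y_t - T b1 + Σ ε_t)`. Subtracting `T` times the
equation of the constrained solution and applying `c1`, which satisfies `c1 Π_X = c1` and inverts
`Π_X A_ff` on `X`, isolates `Σ x_t - T x_p*`; dividing by `T` gives the identity. -/

open Matrix MeasureTheory Finset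
open scoped BigOperators

noncomputable section
namespace TTSA

lemma mv_mul {k l p : ℕ} (M : Matrix (Fin k) (Fin l) ℝ) (N : Matrix (Fin l) (Fin p) ℝ)
    (v : E p) : mv (M * N) v = mv M (mv N v) := by
  simp [mv]

section ProjectedIteration

variable {𝕜 V W : Type*} [Field 𝕜] [AddCommGroup V] [Module 𝕜 V] [AddCommGroup W] [Module 𝕜 W]

theorem sub_eq_smul_map_sum_of_projected_iterate (P : V →ₗ[𝕜] V) {α : 𝕜} {g x : ℕ → V}
    (hfix : ∀ t, P (x t) = x t) (hrec : ∀ t, x (t + 1) = P (x t + α • g t)) (T : ℕ) :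
    x T - x 0 = α • P (∑ t ∈ range T, g t) := by
  rw [← Finset.sum_range_sub, map_sum, Finset.smul_sum]
  refine Finset.sum_congr rfl fun t _ => ?_
  rw [hrec, map_add, hfix, map_smul, add_sub_cancel_left]

variable {P C A : V →ₗ[𝕜] V} {B : W →ₗ[𝕜] V} {X : Submodule 𝕜 V} {b xp : V} {yp : W}
  {α : 𝕜} {x ε : ℕ → V} {y : ℕ → W}

theorem map_sum_sub_eq_of_projected_iterate (hPX : ∀ v, P v ∈ X) (hPfix : ∀ v ∈ X, P v = v)
    (hCP : ∀ v, C (P v) = C v) (hCA : ∀ v ∈ X, C (A v) = v) (hα : α ≠ 0) (hx0 : x 0 ∈ X)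
    (hrec : ∀ t, x (t + 1) = P (x t + α • (A (x t) + B (y t) - b + ε t)))
    (hxp : xp ∈ X) (hsol : P (A xp + B yp - b) = 0) (T : ℕ) :
    C (α⁻¹ • (x T - x 0) - P (∑ t ∈ range T, ε t)) =
      (∑ t ∈ range T, x t - (T : 𝕜) • xp) + C (B (∑ t ∈ range T, y t - (T : 𝕜) • yp)) := by
  have hmem : ∀ t, x t ∈ X
    | 0 => hx0
    | t + 1 => hrec t ▸ hPX _
  have hdiff : ∑ t ∈ range T, (A (x t) + B (y t) - b + ε t) - ∑ t ∈ range T, ε t =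
      (A (∑ t ∈ range T, x t - (T : 𝕜) • xp) + B (∑ t ∈ range T, y t - (T : 𝕜) • yp)) +
        (T : 𝕜) • (A xp + B yp - b) := by
    simp only [sum_add_distrib, sum_sub_distrib, map_sub, map_sum, map_smul, sum_const,
      card_range, ← Nat.cast_smul_eq_nsmul 𝕜]
    module
  have hDx : ∑ t ∈ range T, x t - (T : 𝕜) • xp ∈ X :=
    X.sub_mem (X.sum_mem fun t _ => hmem t) (X.smul_mem _ hxp)
  rw [sub_eq_smul_map_sum_of_projected_iterate P (fun t => hPfix _ (hmem t)) hrec,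
    inv_smul_smul₀ hα, ← map_sub, hdiff, map_add, map_smul, hsol, smul_zero, add_zero, hCP,
    map_add, hCA _ hDx]

theorem average_sub_eq_of_projected_iterate [CharZero 𝕜] (hPX : ∀ v, P v ∈ X)
    (hPfix : ∀ v ∈ X, P v = v) (hCP : ∀ v, C (P v) = C v) (hCA : ∀ v ∈ X, C (A v) = v)
    (hα : α ≠ 0) (hx0 : x 0 ∈ X)
    (hrec : ∀ t, x (t + 1) = P (x t + α • (A (x t) + B (y t) - b + ε t)))
    (hxp : xp ∈ X) (hsol : P (A xp + B yp - b) = 0) {T : ℕ} (hT : T ≠ 0) :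
    (T : 𝕜)⁻¹ • ∑ t ∈ range T, x t - xp =
      (T : 𝕜)⁻¹ • C (α⁻¹ • (x T - x 0) - P (∑ t ∈ range T, ε t)) -
        C (B ((T : 𝕜)⁻¹ • ∑ t ∈ range T, y t - yp)) := by
  have hT' : (T : 𝕜) ≠ 0 := Nat.cast_ne_zero.mpr hT
  rw [map_sum_sub_eq_of_projected_iterate hPX hPfix hCP hCA hα hx0 hrec hxp hsol]
  simp only [map_sub, map_smul, smul_add, smul_sub, smul_smul, inv_mul_cancel₀ hT', one_smul]
  abel

end ProjectedIteration

section Orthonormal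

variable {k l : ℕ} {U : Matrix (Fin k) (Fin l) ℝ}

theorem mv_mul_transpose_mem_range (v : E k) :
    mv (U * Uᵀ) v ∈ LinearMap.range (toEuclideanLin U) :=
  ⟨mv Uᵀ v, (mv_mul U Uᵀ v).symm⟩

theorem mv_mul_transpose_of_mem_range (hU : Uᵀ * U = 1) {v : E k}
    (hv : v ∈ LinearMap.range (toEuclideanLin U)) : mv (U * Uᵀ) v = v := by
  obtain ⟨w, rfl⟩ := hv
  change mv (U * Uᵀ) (mv U w) = mv U w
  rw [← mv_mul, Matrix.mul_assoc, hU, Matrix.mul_one]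

theorem resolvent_mv_mul_transpose (hU : Uᵀ * U = 1) (A : Matrix (Fin k) (Fin k) ℝ) (v : E k) :
    mv (resolvent U A) (mv (U * Uᵀ) v) = mv (resolvent U A) v := by
  rw [← mv_mul, resolvent]
  simp only [Matrix.mul_assoc, ← Matrix.mul_assoc Uᵀ U Uᵀ, hU, Matrix.one_mul]

theorem resolvent_mv_mv_of_mem_range {A : Matrix (Fin k) (Fin k) ℝ} (hA : IsUnit (Uᵀ * A * U))
    {v : E k} (hv : v ∈ LinearMap.range (toEuclideanLin U)) : mv (resolvent U A) (mv A v) = v := by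
  obtain ⟨w, rfl⟩ := hv
  change mv (resolvent U A) (mv A (mv U w)) = mv U w
  have hinv : (Uᵀ * A * U)⁻¹ * (Uᵀ * A * U) = 1 :=
    Matrix.nonsing_inv_mul _ ((Matrix.isUnit_iff_isUnit_det _).mp hA)
  rw [← mv_mul, ← mv_mul, resolvent]
  simp only [Matrix.mul_assoc] at hinv ⊢
  rw [hinv, Matrix.mul_one]

end Orthonormal

theorem fast_average_exact_identity_general {n m d : ℕ}
    (Aff : Matrix (Fin n) (Fin n) ℝ) (Afs : Matrix (Fin n) (Fin m) ℝ)
    (b1 : E n)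
    (UX : Matrix (Fin n) (Fin d) ℝ)
    (hUX : UXᵀ * UX = 1)
    (α : ℝ) (hα : 0 < α)
    (x : ℕ → E n) (y : ℕ → E m) (ε : ℕ → E n)
    (hx0 : x 0 ∈ Set.range (mv UX))
    (hrecx : ∀ t : ℕ, x (t + 1) =
      mv (UX * UXᵀ) (x t + α • (mv Aff (x t) + mv Afs (y t) - b1 + ε t)))
    (h1 : IsUnit (UXᵀ * Aff * UX))
    (xp : E n) (yp : E m)
    (hxp : xp ∈ Set.range (mv UX))
    (hsolx : mv (UX * UXᵀ) (mv Aff xp + mv Afs yp - b1) = 0) :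
    ∀ T : ℕ, 1 ≤ T →
      (T : ℝ)⁻¹ • (∑ t ∈ Finset.range T, x t) - xp =
      (T : ℝ)⁻¹ • mv (resolvent UX Aff)
          (α⁻¹ • (x T - x 0) - mv (UX * UXᵀ) (∑ t ∈ Finset.range T, ε t)) -
      mv (resolvent UX Aff * Afs)
        ((T : ℝ)⁻¹ • (∑ t ∈ Finset.range T, y t) - yp) := by
  intro T hT
  rw [mv_mul (resolvent UX Aff) Afs]
  exact average_sub_eq_of_projected_iterate (P := toEuclideanLin (UX * UXᵀ))
    (C := toEuclideanLin (resolvent UX Aff)) (A := toEuclideanLin Aff)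
    (B := toEuclideanLin Afs) mv_mul_transpose_mem_range
    (fun _ => mv_mul_transpose_of_mem_range hUX)
    (resolvent_mv_mul_transpose hUX Aff)
    (fun _ => resolvent_mv_mv_of_mem_range h1) hα.ne' hx0 hrecx hxp hsolx
    (Nat.one_le_iff_ne_zero.mp hT)

/-- exact identity for the fast Polyak–Ruppert average around the
constrained solution, with `c1 = resolvent U_X A_ff`. -/
theorem fast_average_exact_identity {n m d r : ℕ}
    (Aff : Matrix (Fin n) (Fin n) ℝ) (Afs : Matrix (Fin n) (Fin m) ℝ)
    (Asf : Matrix (Fin m) (Fin n) ℝ) (Ass : Matrix (Fin m) (Fin m) ℝ)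
    (b1 : E n) (b2 : E m)
    (UX : Matrix (Fin n) (Fin d) ℝ) (UY : Matrix (Fin m) (Fin r) ℝ)
    (hUX : UXᵀ * UX = 1) (hUY : UYᵀ * UY = 1)
    (α β : ℝ) (hα : 0 < α) (hβ : 0 < β)
    (x : ℕ → E n) (y : ℕ → E m) (ε : ℕ → E n) (ψ : ℕ → E m)
    (hx0 : x 0 ∈ Set.range (mv UX)) (hy0 : y 0 ∈ Set.range (mv UY))
    (hrecx : ∀ t : ℕ, x (t + 1) =
      mv (UX * UXᵀ) (x t + α • (mv Aff (x t) + mv Afs (y t) - b1 + ε t)))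
    (hrecy : ∀ t : ℕ, y (t + 1) =
      mv (UY * UYᵀ) (y t + β • (mv Asf (x t) + mv Ass (y t) - b2 + ψ t)))
    (h1 : IsUnit (UXᵀ * Aff * UX))
    (xp : E n) (yp : E m)
    (hxp : xp ∈ Set.range (mv UX)) (hyp : yp ∈ Set.range (mv UY))
    (hsolx : mv (UX * UXᵀ) (mv Aff xp + mv Afs yp - b1) = 0)
    (hsoly : mv (UY * UYᵀ) (mv Asf xp + mv Ass yp - b2) = 0) :
    ∀ T : ℕ, 1 ≤ T →
      (T : ℝ)⁻¹ • (∑ t ∈ Finset.range T, x t) - xp =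
      (T : ℝ)⁻¹ • mv (resolvent UX Aff)
          (α⁻¹ • (x T - x 0) - mv (UX * UXᵀ) (∑ t ∈ Finset.range T, ε t)) -
      mv (resolvent UX Aff * Afs)
        ((T : ℝ)⁻¹ • (∑ t ∈ Finset.range T, y t) - yp) :=
  fast_average_exact_identity_general Aff Afs b1 UX hUX α hα x y ε hx0 hrecx h1 xp yp hxp hsolx

end TTSA
end
end
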